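/- arXiv:2011.02476 — 7 statements merged into one kernel-verified Lean document; each statement's English description precedes it below -/
import Mathlib

section
/- Let M = ℝ₊ with the usual metric, φ(x) = 1/(x+1) for x ∈ M, and T(x) = [x + φ(x), ∞) for x ∈ M. Then φ is lower semi-continuous, each T(x) is a nonempty closed subset of M, for every x ∈ M one has dist(x, T(x)) ≤ φ(x) − inf φ(T(x)), and yet T has no fixed point, i.e., there is no x ∈ M with x ∈ T(x). (This answers Penot's problem in the negative.) -/
open scoped NNReal Topology
open Filter Set

/-!
The values `T x` are closed rays reaching arbitrarily far, so `inf φ (T x) = 0` because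
`φ x → 0` at infinity, and `dist(x, T x) = φ x`; the Caristi-type inequality therefore holds
with equality. A fixed point would need `x + φ x ≤ x`, impossible since `φ > 0`.
-/

theorem Real.sInf_image_eq_zero_of_tendsto {α : Type*} {f : α → ℝ} {l : Filter α} [l.NeBot]
    {s : Set α} (hs : s ∈ l) (hf₀ : ∀ y ∈ s, 0 ≤ f y) (hf : Tendsto f l (𝓝 0)) :
    sInf (f '' s) = 0 := by
  have hbdd : BddBelow (f '' s) := ⟨0, forall_mem_image.2 hf₀⟩
  refine le_antisymm ?_ (Real.sInf_nonneg (forall_mem_image.2 hf₀))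
  exact ge_of_tendsto hf (mem_of_superset hs fun y hy => csInf_le hbdd (mem_image_of_mem f hy))

theorem NNReal.setOf_le_coe_mem_atTop (a : ℝ) : {y : ℝ≥0 | a ≤ y} ∈ (atTop : Filter ℝ≥0) :=
  (NNReal.tendsto_coe_atTop.2 tendsto_id).eventually_ge_atTop a

theorem NNReal.isClosed_setOf_le_coe (a : ℝ) : IsClosed {y : ℝ≥0 | a ≤ y} :=
  isClosed_le continuous_const NNReal.continuous_coe

theorem NNReal.infDist_setOf_coe_add_le_coe_le (x : ℝ≥0) {r : ℝ} (hr : 0 ≤ r) :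
    Metric.infDist x {y : ℝ≥0 | (x : ℝ) + r ≤ y} ≤ r := by
  let y : ℝ≥0 := ⟨x + r, add_nonneg x.2 hr⟩
  calc Metric.infDist x {y : ℝ≥0 | (x : ℝ) + r ≤ y} ≤ dist x y :=
        Metric.infDist_le_dist_of_mem (le_refl (x + r : ℝ))
    _ = r := by
        rw [NNReal.dist_eq, abs_sub_comm]
        exact (congrArg abs (add_sub_cancel_left (x : ℝ) r)).trans (abs_of_nonneg hr)

theorem NNReal.tendsto_one_div_coe_add_one_atTop :
    Tendsto (fun y : ℝ≥0 => 1 / ((y : ℝ) + 1)) atTop (𝓝 0) := by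
  simp only [one_div]
  exact tendsto_inv_atTop_zero.comp
    (tendsto_atTop_add_const_right _ 1 (NNReal.tendsto_coe_atTop.2 tendsto_id))

/-- Negative answer to Penot's problem: on `M = ℝ₊`, the function `φ x = 1/(x+1)`
is lower semi-continuous, the set-valued map `T x = [x + φ x, ∞)` has nonempty
closed values and satisfies `dist(x, T x) ≤ φ x - inf φ(T x)` for all `x`,
yet `T` has no fixed point. -/
theorem penot_problem_negative_answer
    (φ : ℝ≥0 → ℝ) (hφdef : ∀ x, φ x = 1 / ((x : ℝ) + 1))
    (T : ℝ≥0 → Set ℝ≥0) (hTdef : ∀ x, T x = {y : ℝ≥0 | (x : ℝ) + φ x ≤ (y : ℝ)}) :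
    LowerSemicontinuous φ ∧
    (∀ x, (T x).Nonempty ∧ IsClosed (T x)) ∧
    (∀ x, Metric.infDist x (T x) ≤ φ x - sInf (φ '' T x)) ∧
    ¬∃ x, x ∈ T x := by
  obtain rfl : φ = fun y : ℝ≥0 => 1 / ((y : ℝ) + 1) := funext hφdef
  obtain rfl := funext hTdef
  have hφpos (y : ℝ≥0) : 0 < 1 / ((y : ℝ) + 1) := by positivity
  refine ⟨?_, fun x => ⟨?_, NNReal.isClosed_setOf_le_coe _⟩, fun x => ?_, ?_⟩
  · exact Continuous.lowerSemicontinuous (by fun_prop (disch := intro y; positivity))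
  · exact nonempty_of_mem (NNReal.setOf_le_coe_mem_atTop _)
  · rw [Real.sInf_image_eq_zero_of_tendsto (NNReal.setOf_le_coe_mem_atTop _)
      (fun y _ => (hφpos y).le) NNReal.tendsto_one_div_coe_add_one_atTop, sub_zero]
    exact NNReal.infDist_setOf_coe_add_le_coe_le x (hφpos x).le
  · rintro ⟨x, hx⟩
    linarith [hφpos x, show (x : ℝ) + 1 / ((x : ℝ) + 1) ≤ x from hx]
end

section
/- Let M = [1, +∞) with the usual metric, and for x ∈ M set T(x) = [x + 1/(x(x+1)), x + 1] and φ(x) = 1/x. Then each T(x) is a nonempty compact subset of M, for every x ∈ M one has dist(x, T(x)) ≤ φ(x) − inf φ(T(x)), and yet T has no fixed point in M. (Hence Penot's problem has a negative answer even when T takes nonempty compact values.) -/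
/-! The values `T x` move strictly to the right of `x`, so there is no fixed point. The gap
`1 / (x (x + 1))` between `x` and the left end of `T x` is exactly `1 / x - 1 / (x + 1)`, the drop
of `φ` from `x` to the right end of `T x`, and `φ` is decreasing, so the Caristi-type inequality
holds with equality. -/

open Metric Set

theorem Metric.infDist_le_sub_sInf_image {α : Type*} [PseudoMetricSpace α] {φ : α → ℝ}
    {s : Set α} {x a b : α} (ha : a ∈ s) (hb : b ∈ s) (hφ : BddBelow (φ '' s))
    (h : dist x a ≤ φ x - φ b) : infDist x s ≤ φ x - sInf (φ '' s) :=
  calc infDist x s ≤ dist x a := infDist_le_dist_of_mem ha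
    _ ≤ φ x - φ b := h
    _ ≤ φ x - sInf (φ '' s) := sub_le_sub_left (csInf_le hφ (mem_image_of_mem φ hb)) _

namespace Penot

variable {x : ℝ}

theorem one_div_mul_add_one_eq_sub (hx : 0 < x) : 1 / (x * (x + 1)) = 1 / x - 1 / (x + 1) := by
  field_simp
  ring

theorem lt_add_one_div_mul_add_one (hx : 0 < x) : x < x + 1 / (x * (x + 1)) := by
  have : 0 < 1 / (x * (x + 1)) := by positivity
  linarith

theorem add_one_div_mul_add_one_le (hx : 1 ≤ x) : x + 1 / (x * (x + 1)) ≤ x + 1 := by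
  have : 1 / (x * (x + 1)) ≤ 1 := by
    rw [div_le_one (by positivity)]
    nlinarith
  linarith

end Penot

open Penot

/-- Negative answer to Penot's problem with compact values: on `M = [1, ∞)`,
the map `T x = [x + 1/(x(x+1)), x + 1]` has nonempty compact values and, with
`φ x = 1/x`, satisfies `dist(x, T x) ≤ φ x - inf φ(T x)` for all `x ∈ M`,
yet `T` has no fixed point. -/
theorem penot_problem_negative_answer_compact
    (φ : {x : ℝ // 1 ≤ x} → ℝ) (hφdef : ∀ x, φ x = 1 / (x : ℝ))
    (T : {x : ℝ // 1 ≤ x} → Set {x : ℝ // 1 ≤ x})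
    (hTdef : ∀ x, T x =
      {y : {x : ℝ // 1 ≤ x} | (x : ℝ) + 1 / ((x : ℝ) * ((x : ℝ) + 1)) ≤ (y : ℝ) ∧ (y : ℝ) ≤ (x : ℝ) + 1}) :
    (∀ x, (T x).Nonempty ∧ IsCompact (T x)) ∧
    (∀ x, Metric.infDist x (T x) ≤ φ x - sInf (φ '' T x)) ∧
    ¬∃ x, x ∈ T x := by
  have hT : ∀ x : {x : ℝ // 1 ≤ x},
      T x = Subtype.val ⁻¹' Icc ((x : ℝ) + 1 / ((x : ℝ) * ((x : ℝ) + 1))) ((x : ℝ) + 1) := hTdef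
  refine ⟨fun ⟨x, hx⟩ => ⟨?_, ?_⟩, fun ⟨x, hx⟩ => ?_, fun ⟨⟨x, hx⟩, hmem⟩ => ?_⟩
  · exact ⟨⟨x + 1, by linarith⟩, by rw [hT]; exact ⟨add_one_div_mul_add_one_le hx, le_rfl⟩⟩
  · rw [hT]
    exact (Topology.IsClosedEmbedding.subtypeVal isClosed_Ici).isCompact_preimage isCompact_Icc
  · have hx0 : 0 < x := by linarith
    have hleft := lt_add_one_div_mul_add_one hx0
    refine infDist_le_sub_sInf_image (a := ⟨x + 1 / (x * (x + 1)), by linarith⟩)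
      (b := ⟨x + 1, by linarith⟩) ?_ ?_ ⟨0, ?_⟩ ?_
    · rw [hT]; exact ⟨le_rfl, add_one_div_mul_add_one_le hx⟩
    · rw [hT]; exact ⟨add_one_div_mul_add_one_le hx, le_rfl⟩
    · rintro _ ⟨⟨y, hy⟩, -, rfl⟩
      rw [hφdef]
      positivity
    · rw [Subtype.dist_eq, Real.dist_eq, hφdef, hφdef, abs_of_neg (by simpa using hleft),
        ← one_div_mul_add_one_eq_sub hx0]
      simp only [neg_sub, add_sub_cancel_left, le_refl]
  · rw [hT] at hmem
    exact (lt_add_one_div_mul_add_one (by linarith)).not_ge hmem.1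
end

section
/- Let M = ℝ₊ with the usual order ≤, and define d on M by d(x,y) = x + y if x ≠ y and d(x,y) = 0 if x = y. Then d is a metric on M, d is left-monotone, but d is not monotone: there exist x ≤ y ≤ z in M with d(y,z) > d(x,z). -/
open scoped NNReal

lemma aux_pos {x y : ℝ≥0} (h : x ≠ y) : (0:ℝ) < x + y := by
  rcases eq_or_ne x 0 with hx | hx
  · subst hx
    have : 0 < y := pos_iff_ne_zero.mpr (Ne.symm h)
    simpa using this
  · have : 0 < x := pos_iff_ne_zero.mpr hx
    have hy : (0:ℝ) ≤ y := y.coe_nonneg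
    have hx' : (0:ℝ) < x := by exact_mod_cast this
    linarith

/-- On `M = ℝ₊` with its usual order, the distance `d(x,y) = x + y` for `x ≠ y`
and `d(x,y) = 0` for `x = y` is a metric which is left-monotone but not
monotone. -/
theorem left_monotone_not_monotone_example
    (d : ℝ≥0 → ℝ≥0 → ℝ) (hd : ∀ x y, d x y = if x = y then 0 else (x : ℝ) + (y : ℝ)) :
    -- `d` is a metric on `M`:
    ((∀ x y, 0 ≤ d x y) ∧ (∀ x y, d x y = 0 ↔ x = y) ∧ (∀ x y, d x y = d y x) ∧
      (∀ x y z, d x z ≤ d x y + d y z)) ∧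
    -- `d` is left-monotone:
    (∀ x y z : ℝ≥0, x ≤ y → y ≤ z → d x y ≤ d x z) ∧
    -- `d` is not monotone:
    (∃ x y z : ℝ≥0, x ≤ y ∧ y ≤ z ∧ d x z < d y z) := by
  refine ⟨⟨?_, ?_, ?_, ?_⟩, ?_, ?_⟩
  · intro x y
    rw [hd]
    split_ifs with h
    · exact le_refl _
    · exact le_of_lt (aux_pos h)
  · intro x y
    rw [hd]
    split_ifs with h
    · simp [h]
    · simp only [h, iff_false]
      exact ne_of_gt (aux_pos h)
  · intro x y
    rw [hd, hd]
    split_ifs with h h' h'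
    · rfl
    · exact absurd h.symm h'
    · exact absurd h'.symm h
    · ring
  · intro x y z
    have hx := x.coe_nonneg
    have hy := y.coe_nonneg
    have hz := z.coe_nonneg
    rw [hd, hd, hd]
    split_ifs <;> subst_vars <;> first | linarith | simp_all
  · intro x y z hxy hyz
    rw [hd, hd]
    split_ifs with h1 h2 h2
    · rfl
    · exact le_of_lt (aux_pos h2)
    · subst h2
      exact absurd (le_antisymm hxy hyz) h1
    · have : (y:ℝ) ≤ z := by exact_mod_cast hyz
      linarith
  · refine ⟨1, 2, 3, by norm_num, by norm_num, ?_⟩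
    rw [hd, hd]
    norm_num
end

section
/- Let (M,‖·‖,⪯) be a reflexive normed space endowed with a partial order ⪯ in which all order intervals are closed and the norm distance is left-monotone. Let φ : M → ℝ₊ be lower semi-continuous and let T : M → K(M) be a set-valued map with nonempty compact values such that for every x ∈ M there exists a ∈ T(x) with x ⪯ a and ‖x − a‖ ≤ φ(x) − inf φ(T(x) ∩ [x,a]). Then there exists x* ∈ M with x* ∈ T(x*). -/
open Filter Topology

/-- A lower semicontinuous function bounded below attains its infimum on a
nonempty compact set. -/
lemma lsc_exists_min {M : Type*} [TopologicalSpace M] [T2Space M]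
    {φ : M → ℝ} (hφ_nonneg : ∀ x, 0 ≤ φ x) (hφ : LowerSemicontinuous φ)
    {S : Set M} (hS : IsCompact S) (hne : S.Nonempty) :
    ∃ b ∈ S, ∀ y ∈ S, φ b ≤ φ y := by
  have hbdd : BddBelow (φ '' S) := ⟨0, by rintro _ ⟨y, -, rfl⟩; exact hφ_nonneg y⟩
  have hne' : (φ '' S).Nonempty := hne.image φ
  set I := sInf (φ '' S) with hI
  set K : ℕ → Set M := fun n => S ∩ φ ⁻¹' Set.Iic (I + 1 / (n + 1)) with hK
  have hKcl : ∀ n, IsClosed (K n) := fun n =>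
    hS.isClosed.inter (hφ.isClosed_preimage _)
  have hKne : ∀ n, (K n).Nonempty := by
    intro n
    have hlt : I < I + 1 / (n + 1) := by
      have : (0:ℝ) < 1 / (n + 1) := by positivity
      linarith
    obtain ⟨_, ⟨y, hyS, rfl⟩, hy⟩ := exists_lt_of_csInf_lt hne' hlt
    exact ⟨y, hyS, le_of_lt hy⟩
  have hKsub : ∀ n, K (n + 1) ⊆ K n := by
    intro n x hx
    obtain ⟨hx1, hx2⟩ := hx
    refine ⟨hx1, ?_⟩
    simp only [Set.mem_preimage, Set.mem_Iic] at hx2 ⊢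
    have : (1:ℝ) / (n + 1 + 1) ≤ 1 / (n + 1) := by
      apply one_div_le_one_div_of_le <;> push_cast <;> linarith
    refine hx2.trans ?_
    push_cast
    linarith
  obtain ⟨b, hb⟩ := IsCompact.nonempty_iInter_of_sequence_nonempty_isCompact_isClosed
    K hKsub hKne ((hS.inter_right (hφ.isClosed_preimage _))) hKcl
  simp only [Set.mem_iInter] at hb
  have hbS : b ∈ S := (hb 0).1
  refine ⟨b, hbS, fun y hy => ?_⟩
  have h1 : φ b ≤ I := by
    have h2 : ∀ n : ℕ, φ b ≤ I + 1 / (n + 1) := fun n => (hb n).2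
    by_contra h
    push_neg at h
    obtain ⟨n, hn⟩ := exists_nat_one_div_lt (sub_pos.2 h)
    have := h2 n
    linarith
  exact h1.trans (csInf_le hbdd ⟨y, hy, rfl⟩)

/-- **Caristi–Penot theorem in reflexive normed spaces (compact values).**
Let `(M, ‖·‖, ⪯)` be a reflexive normed space with closed order intervals whose
norm distance is left-monotone. Let `φ : M → ℝ₊` be lower semi-continuous and
`T : M → K(M)` a set-valued map with nonempty compact values such that for
every `x` there exists `a ∈ T x` with `x ⪯ a` and
`‖x - a‖ ≤ φ x - inf φ(T x ∩ [x,a])`. Then `T` has a fixed point. -/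
theorem caristi_penot_reflexive_compact {M : Type*}
    [NormedAddCommGroup M] [NormedSpace ℝ M] [PartialOrder M]
    (h_reflexive : Function.Surjective (NormedSpace.inclusionInDoubleDual ℝ M))
    (h_Ici_closed : ∀ a : M, IsClosed (Set.Ici a))
    (h_Iic_closed : ∀ a : M, IsClosed (Set.Iic a))
    (h_left_monotone : ∀ x y z : M, x ≤ y → y ≤ z → ‖x - y‖ ≤ ‖x - z‖)
    (φ : M → ℝ) (hφ_nonneg : ∀ x, 0 ≤ φ x) (hφ : LowerSemicontinuous φ)
    (T : M → Set M) (hT_ne : ∀ x, (T x).Nonempty) (hT_cpt : ∀ x, IsCompact (T x))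
    (hcaristi : ∀ x, ∃ a ∈ T x, x ≤ a ∧
      ‖x - a‖ ≤ φ x - sInf (φ '' (T x ∩ Set.Icc x a))) :
    ∃ x, x ∈ T x := by
  -- The space is complete because it is reflexive.
  haveI : CompleteSpace M :=
    ((NormedSpace.inclusionInDoubleDualLi ℝ (E := M)).isometry.isUniformInducing.completeSpace_congr
      h_reflexive).mpr inferInstance
  -- The Brøndsted order
  set r : M → M → Prop := fun x y => x ≤ y ∧ ‖x - y‖ ≤ φ x - φ y with hr
  have hrefl : ∀ x, r x x := fun x => ⟨le_rfl, by simp⟩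
  have htrans : Transitive r := by
    rintro x y z ⟨hxy, hxy'⟩ ⟨hyz, hyz'⟩
    refine ⟨hxy.trans hyz, ?_⟩
    have := norm_sub_le_norm_sub_add_norm_sub x y z
    linarith
  -- every chain is bounded above
  have hchain : ∀ c, IsChain r c → ∃ ub, ∀ a ∈ c, r a ub := by
    intro c hc
    rcases c.eq_empty_or_nonempty with rfl | ⟨a₀, ha₀⟩
    · exact ⟨0, fun a ha => absurd ha (Set.notMem_empty a)⟩
    have hbdd : BddBelow (φ '' c) := ⟨0, by rintro _ ⟨y, -, rfl⟩; exact hφ_nonneg y⟩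
    have hne' : (φ '' c).Nonempty := ⟨φ a₀, a₀, ha₀, rfl⟩
    set I := sInf (φ '' c) with hI
    -- choose a minimizing sequence
    have hsel : ∀ n : ℕ, ∃ y ∈ c, φ y < I + 1 / (n + 1) := by
      intro n
      have hlt : I < I + 1 / (n + 1) := by
        have : (0:ℝ) < 1 / (n + 1) := by positivity
        linarith
      obtain ⟨_, ⟨y, hyc, rfl⟩, hy⟩ := exists_lt_of_csInf_lt hne' hlt
      exact ⟨y, hyc, hy⟩
    choose u huc huφ using hsel
    have huI : ∀ n, I ≤ φ (u n) := fun n => csInf_le hbdd ⟨u n, huc n, rfl⟩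
    have hIle : ∀ a ∈ c, I ≤ φ a := fun a ha => csInf_le hbdd ⟨a, ha, rfl⟩
    -- comparability within the chain
    have hcomp : ∀ a ∈ c, ∀ b ∈ c, r a b ∨ r b a := by
      intro a ha b hb
      rcases eq_or_ne a b with rfl | hab
      · exact Or.inl (hrefl a)
      · exact hc ha hb hab
    -- the sequence is Cauchy
    have hcauchy : CauchySeq u := by
      refine cauchySeq_of_le_tendsto_0 (fun N : ℕ => 1 / ((N : ℝ) + 1)) ?_ ?_
      · intro n m N hn hm
        rcases hcomp (u n) (huc n) (u m) (huc m) with ⟨_, h⟩ | ⟨_, h⟩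
        · rw [dist_eq_norm]
          have h1 := huφ n
          have h2 := huI m
          have : (1:ℝ) / (n + 1) ≤ 1 / (N + 1) := by
            apply one_div_le_one_div_of_le <;> push_cast <;> [linarith; (exact_mod_cast by omega)]
          linarith
        · rw [dist_eq_norm, norm_sub_rev]
          have h1 := huφ m
          have h2 := huI n
          have : (1:ℝ) / (m + 1) ≤ 1 / (N + 1) := by
            apply one_div_le_one_div_of_le <;> push_cast <;> [linarith; (exact_mod_cast by omega)]
          linarith
      · exact tendsto_one_div_add_atTop_nhds_zero_nat
    obtain ⟨x, hx⟩ := cauchySeq_tendsto_of_complete hcauchy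
    refine ⟨x, fun a ha => ?_⟩
    by_cases hfreq : ∃ᶠ n in atTop, r a (u n)
    · -- a subsequence dominates a
      obtain ⟨ψ, hψmono, hψ⟩ := Filter.extraction_of_frequently_atTop hfreq
      have hxψ : Tendsto (fun n => u (ψ n)) atTop (𝓝 x) :=
        hx.comp hψmono.tendsto_atTop
      have hle : a ≤ x :=
        (h_Ici_closed a).mem_of_tendsto hxψ (Eventually.of_forall fun n => (hψ n).1)
      refine ⟨hle, ?_⟩
      by_contra hcon
      push_neg at hcon
      -- hcon : φ a - φ x < ‖a - x‖
      set δ : ℝ := (φ x - (φ a - ‖a - x‖)) / 2 with hδ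
      have hδpos : 0 < δ := by simp only [hδ]; linarith
      have h1 : ∀ᶠ n in atTop, φ x - δ < φ (u (ψ n)) :=
        hxψ.eventually (hφ x (φ x - δ) (by linarith))
      have h2 : Tendsto (fun n => ‖a - u (ψ n)‖) atTop (𝓝 ‖a - x‖) :=
        ((continuous_norm.comp (continuous_const.sub continuous_id)).tendsto x).comp hxψ
      have h3 : ∀ᶠ n in atTop, ‖a - x‖ - δ < ‖a - u (ψ n)‖ :=
        h2.eventually (eventually_gt_nhds (by linarith))
      obtain ⟨n, hn1, hn3⟩ := (h1.and h3).exists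
      have h4 := (hψ n).2
      simp only [hδ] at hn1 hn3
      linarith
    · -- eventually a dominates the sequence, which then converges to a
      rw [Filter.not_frequently] at hfreq
      simp only [Filter.eventually_atTop] at hfreq
      obtain ⟨N, hN⟩ := hfreq
      have hdom : ∀ n ≥ N, r (u n) a := by
        intro n hn
        rcases hcomp a ha (u n) (huc n) with h | h
        · exact absurd h (hN n hn)
        · exact h
      have hua : Tendsto u atTop (𝓝 a) := by
        rw [tendsto_iff_dist_tendsto_zero]
        apply squeeze_zero' (Eventually.of_forall fun n => dist_nonneg)
          (g := fun n : ℕ => 1 / ((n : ℝ) + 1))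
        · filter_upwards [Filter.eventually_atTop.2 ⟨N, fun n hn => hdom n hn⟩] with n hn
          rw [dist_eq_norm]
          have h1 := hn.2
          have h2 := huφ n
          have h3 := hIle a ha
          linarith
        · exact tendsto_one_div_add_atTop_nhds_zero_nat
      have : a = x := tendsto_nhds_unique hua hx
      rw [← this]
      exact hrefl a
  -- Zorn's lemma gives a maximal element
  obtain ⟨m, hm⟩ := exists_maximal_of_chains_bounded hchain (fun hxy hyz => htrans hxy hyz)
  -- apply the Caristi condition at m
  obtain ⟨a, haT, hma, hnorm⟩ := hcaristi m
  set S := T m ∩ Set.Icc m a with hS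
  have hScpt : IsCompact S := (hT_cpt m).inter_right
    (by rw [← Set.Ici_inter_Iic]; exact (h_Ici_closed m).inter (h_Iic_closed a))
  have hSne : S.Nonempty := ⟨a, haT, hma, le_rfl⟩
  obtain ⟨b, hbS, hbmin⟩ := lsc_exists_min hφ_nonneg hφ hScpt hSne
  have hinf : sInf (φ '' S) = φ b := by
    have hbdd : BddBelow (φ '' S) := ⟨0, by rintro _ ⟨y, -, rfl⟩; exact hφ_nonneg y⟩
    exact le_antisymm (csInf_le hbdd ⟨b, hbS, rfl⟩)
      (le_csInf (hSne.image φ) (by rintro _ ⟨y, hy, rfl⟩; exact hbmin y hy))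
  have hrmb : r m b := by
    refine ⟨hbS.2.1, ?_⟩
    have h1 : ‖m - b‖ ≤ ‖m - a‖ := h_left_monotone m b a hbS.2.1 hbS.2.2
    rw [hinf] at hnorm
    linarith
  have hrbm := hm b hrmb
  have : b = m := le_antisymm hrbm.1 hrmb.1
  exact ⟨m, this ▸ hbS.1⟩
end

section
/- Let X be a reflexive Banach space endowed with a partial order ⪯ whose order intervals are closed and convex, and let M be a nonempty closed subset of X. Then every bounded monotone increasing or monotone decreasing sequence (xₙ) in M is weakly convergent. -/
/-!
Send `X` into its bidual with the weak-* topology. A bounded sequence lands in a weak-* compact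
ball (Banach–Alaoglu), so it has cluster points there, and by reflexivity each of them is the
image of some `a ∈ X`. By Hahn–Banach separation such an `a` lies in every closed convex set
that eventually contains the sequence. For an increasing sequence the sets `[xₙ, →)` show that
every cluster point is an upper bound of the sequence, and then `(←, b]` for another cluster
point `b` gives `a ⪯ b`; so the cluster point is unique and the sequence converges weakly to it.
The decreasing case is symmetric.
-/

open Filter Topology

namespace NormedSpace

variable {X : Type*} [NormedAddCommGroup X] [NormedSpace ℝ X]

/-- Weak convergence in `X` is convergence of the images under this map. -/
noncomputable def toWeakBidual (x : X) : WeakDual ℝ (StrongDual ℝ X) :=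
  StrongDual.toWeakDual (inclusionInDoubleDual ℝ X x)

theorem surjective_toWeakBidual
    (h_reflexive : Function.Surjective (inclusionInDoubleDual ℝ X)) :
    Function.Surjective (toWeakBidual (X := X)) :=
  StrongDual.toWeakDual.surjective.comp h_reflexive

theorem _root_.Bornology.IsBounded.isCompact_closure_image_toWeakBidual {s : Set X}
    (hs : Bornology.IsBounded s) : IsCompact (closure (toWeakBidual '' s)) :=
  -- `WeakDual` carries the norm bornology, so boundedness transfers along the isometry `X → X**`.
  have h_image : Bornology.IsBounded (toWeakBidual '' s) :=
    (inclusionInDoubleDualLi ℝ (E := X)).lipschitz.isBounded_image hs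
  WeakDual.isCompact_of_bounded_of_closed (WeakDual.isBounded_closure h_image) isClosed_closure

theorem mem_of_mapClusterPt_toWeakBidual {ι : Type*} {l : Filter ι} {x : ι → X} {a : X}
    {S : Set X} (ha : MapClusterPt (toWeakBidual a) l (toWeakBidual ∘ x))
    (hS_convex : Convex ℝ S) (hS_closed : IsClosed S) (hx : ∀ᶠ i in l, x i ∈ S) : a ∈ S := by
  by_contra haS
  obtain ⟨f, u, hfa, hfS⟩ := geometric_hahn_banach_point_closed hS_convex hS_closed haS
  have h_nhds : {φ : WeakDual ℝ (StrongDual ℝ X) | φ f < u} ∈ 𝓝 (toWeakBidual a) :=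
    (isOpen_Iio.preimage (WeakDual.eval_continuous f)).mem_nhds hfa
  obtain ⟨i, hi_lt, hi_mem⟩ :=
    ((mapClusterPt_iff_frequently.mp ha _ h_nhds).and_eventually hx).exists
  exact (hfS _ hi_mem).not_gt hi_lt

theorem exists_tendsto_toWeakBidual_of_unique_mapClusterPt {ι : Type*} {l : Filter ι} [l.NeBot]
    (h_reflexive : Function.Surjective (inclusionInDoubleDual ℝ X)) {x : ι → X}
    (h_bdd : Bornology.IsBounded (Set.range x))
    (h_unique : ∀ a b, MapClusterPt (toWeakBidual a) l (toWeakBidual ∘ x) →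
      MapClusterPt (toWeakBidual b) l (toWeakBidual ∘ x) → a = b) :
    ∃ a, Tendsto (toWeakBidual ∘ x) l (𝓝 (toWeakBidual a)) := by
  have hK := h_bdd.isCompact_closure_image_toWeakBidual
  have hx_mem : ∀ᶠ i in l, (toWeakBidual ∘ x) i ∈ closure (toWeakBidual '' Set.range x) :=
    .of_forall fun i => subset_closure ⟨x i, ⟨i, rfl⟩, rfl⟩
  obtain ⟨φ, -, hφ⟩ := hK.exists_mapClusterPt (le_principal_iff.mpr hx_mem)
  obtain ⟨a, rfl⟩ := surjective_toWeakBidual h_reflexive φ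
  refine ⟨a, hK.tendsto_nhds_of_unique_mapClusterPt hx_mem fun ψ _ hψ => ?_⟩
  obtain ⟨b, rfl⟩ := surjective_toWeakBidual h_reflexive ψ
  rw [h_unique b a hψ hφ]

section Order

variable [PartialOrder X] {ι : Type*} [Preorder ι] {x : ι → X} {a b : X}

theorem _root_.Monotone.ge_of_mapClusterPt_toWeakBidual
    (h_Ici_closed : ∀ a : X, IsClosed (Set.Ici a)) (h_Ici_convex : ∀ a : X, Convex ℝ (Set.Ici a))
    (hx : Monotone x) (hb : MapClusterPt (toWeakBidual b) atTop (toWeakBidual ∘ x)) (n : ι) :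
    x n ≤ b :=
  Set.mem_Ici.mp <| mem_of_mapClusterPt_toWeakBidual hb (h_Ici_convex _) (h_Ici_closed _)
    ((eventually_ge_atTop n).mono fun _ hm => hx hm)

theorem _root_.Antitone.le_of_mapClusterPt_toWeakBidual
    (h_Iic_closed : ∀ a : X, IsClosed (Set.Iic a)) (h_Iic_convex : ∀ a : X, Convex ℝ (Set.Iic a))
    (hx : Antitone x) (hb : MapClusterPt (toWeakBidual b) atTop (toWeakBidual ∘ x)) (n : ι) :
    b ≤ x n :=
  Set.mem_Iic.mp <| mem_of_mapClusterPt_toWeakBidual hb (h_Iic_convex _) (h_Iic_closed _)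
    ((eventually_ge_atTop n).mono fun _ hm => hx hm)

theorem _root_.Monotone.eq_of_mapClusterPt_toWeakBidual
    (h_Ici_closed : ∀ a : X, IsClosed (Set.Ici a)) (h_Iic_closed : ∀ a : X, IsClosed (Set.Iic a))
    (h_Ici_convex : ∀ a : X, Convex ℝ (Set.Ici a)) (h_Iic_convex : ∀ a : X, Convex ℝ (Set.Iic a))
    (hx : Monotone x) (ha : MapClusterPt (toWeakBidual a) atTop (toWeakBidual ∘ x))
    (hb : MapClusterPt (toWeakBidual b) atTop (toWeakBidual ∘ x)) : a = b :=
  have h_le {c d : X} (hc : MapClusterPt (toWeakBidual c) atTop (toWeakBidual ∘ x))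
      (hd : MapClusterPt (toWeakBidual d) atTop (toWeakBidual ∘ x)) : c ≤ d :=
    Set.mem_Iic.mp <| mem_of_mapClusterPt_toWeakBidual hc (h_Iic_convex d) (h_Iic_closed d) <|
      .of_forall (hx.ge_of_mapClusterPt_toWeakBidual h_Ici_closed h_Ici_convex hd)
  le_antisymm (h_le ha hb) (h_le hb ha)

theorem _root_.Antitone.eq_of_mapClusterPt_toWeakBidual
    (h_Ici_closed : ∀ a : X, IsClosed (Set.Ici a)) (h_Iic_closed : ∀ a : X, IsClosed (Set.Iic a))
    (h_Ici_convex : ∀ a : X, Convex ℝ (Set.Ici a)) (h_Iic_convex : ∀ a : X, Convex ℝ (Set.Iic a))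
    (hx : Antitone x) (ha : MapClusterPt (toWeakBidual a) atTop (toWeakBidual ∘ x))
    (hb : MapClusterPt (toWeakBidual b) atTop (toWeakBidual ∘ x)) : a = b :=
  have h_le {c d : X} (hc : MapClusterPt (toWeakBidual c) atTop (toWeakBidual ∘ x))
      (hd : MapClusterPt (toWeakBidual d) atTop (toWeakBidual ∘ x)) : c ≤ d :=
    Set.mem_Ici.mp <| mem_of_mapClusterPt_toWeakBidual hd (h_Ici_convex c) (h_Ici_closed c) <|
      .of_forall (hx.le_of_mapClusterPt_toWeakBidual h_Iic_closed h_Iic_convex hc)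
  le_antisymm (h_le ha hb) (h_le hb ha)

end Order

end NormedSpace

open NormedSpace in
theorem bounded_monotone_weakly_convergent_general {X : Type*}
    [NormedAddCommGroup X] [NormedSpace ℝ X] [PartialOrder X]
    (h_reflexive : Function.Surjective (NormedSpace.inclusionInDoubleDual ℝ X))
    (h_Ici_closed : ∀ a : X, IsClosed (Set.Ici a))
    (h_Iic_closed : ∀ a : X, IsClosed (Set.Iic a))
    (h_Ici_convex : ∀ a : X, Convex ℝ (Set.Ici a))
    (h_Iic_convex : ∀ a : X, Convex ℝ (Set.Iic a))
    (x : ℕ → X)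
    (h_bdd : Bornology.IsBounded (Set.range x))
    (h_mono : (∀ n, x n ≤ x (n + 1)) ∨ (∀ n, x (n + 1) ≤ x n)) :
    ∃ a : X, ∀ f : X →L[ℝ] ℝ, Tendsto (fun n => f (x n)) atTop (𝓝 (f a)) := by
  have h_unique : ∀ a b, MapClusterPt (toWeakBidual a) atTop (toWeakBidual ∘ x) →
      MapClusterPt (toWeakBidual b) atTop (toWeakBidual ∘ x) → a = b := by
    rcases h_mono with h_inc | h_dec
    · exact fun _ _ => (monotone_nat_of_le_succ h_inc).eq_of_mapClusterPt_toWeakBidual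
        h_Ici_closed h_Iic_closed h_Ici_convex h_Iic_convex
    · exact fun _ _ => (antitone_nat_of_succ_le h_dec).eq_of_mapClusterPt_toWeakBidual
        h_Ici_closed h_Iic_closed h_Ici_convex h_Iic_convex
  obtain ⟨a, ha⟩ := exists_tendsto_toWeakBidual_of_unique_mapClusterPt h_reflexive h_bdd h_unique
  exact ⟨a, fun f => ((WeakDual.eval_continuous f).tendsto _).comp ha⟩

/-- In a reflexive Banach space with a partial order whose order intervals are
closed and convex, every bounded monotone (increasing or decreasing) sequence
in a nonempty closed subset `M` is weakly convergent. -/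
theorem bounded_monotone_weakly_convergent {X : Type*}
    [NormedAddCommGroup X] [NormedSpace ℝ X] [CompleteSpace X] [PartialOrder X]
    (h_reflexive : Function.Surjective (NormedSpace.inclusionInDoubleDual ℝ X))
    (h_Ici_closed : ∀ a : X, IsClosed (Set.Ici a))
    (h_Iic_closed : ∀ a : X, IsClosed (Set.Iic a))
    (h_Ici_convex : ∀ a : X, Convex ℝ (Set.Ici a))
    (h_Iic_convex : ∀ a : X, Convex ℝ (Set.Iic a))
    (M : Set X) (hM_ne : M.Nonempty) (hM_closed : IsClosed M)
    (x : ℕ → X) (hxM : ∀ n, x n ∈ M)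
    (h_bdd : Bornology.IsBounded (Set.range x))
    (h_mono : (∀ n, x n ≤ x (n + 1)) ∨ (∀ n, x (n + 1) ≤ x n)) :
    ∃ a : X, ∀ f : X →L[ℝ] ℝ, Tendsto (fun n => f (x n)) atTop (𝓝 (f a)) :=
  bounded_monotone_weakly_convergent_general h_reflexive h_Ici_closed h_Iic_closed h_Ici_convex
    h_Iic_convex x h_bdd h_mono
end

section
/- Let (X,‖·‖,⪯) be a normed space endowed with a partial order ⪯ whose norm distance is left-monotone, let M be a nonempty subset of X, and let φ : M → ℝ₊ be a function. Define the relation <_φ on M by: y <_φ x if and only if there exists a ∈ M such that x ⪯ y ⪯ a and ‖x − a‖ ≤ φ(x) − φ(y). Then <_φ is a partial order on M, i.e., it is reflexive, antisymmetric and transitive. -/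
/-- On a normed space with a left-monotone partial order, for a nonempty subset
`M` and `φ : M → ℝ₊`, the relation `y <_φ x ↔ ∃ a ∈ M, x ⪯ y ⪯ a ∧
‖x - a‖ ≤ φ x - φ y` is a partial order on `M` (reflexive, antisymmetric and
transitive). -/
theorem caristi_order_is_partial_order {X : Type*}
    [NormedAddCommGroup X] [NormedSpace ℝ X] [PartialOrder X]
    (h_left_monotone : ∀ x y z : X, x ≤ y → y ≤ z → ‖x - y‖ ≤ ‖x - z‖)
    (M : Set X) (hM_ne : M.Nonempty)
    (φ : X → ℝ) (hφ_nonneg : ∀ x ∈ M, 0 ≤ φ x)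
    (r : X → X → Prop)
    (hr : ∀ y x, r y x ↔ ∃ a ∈ M, x ≤ y ∧ y ≤ a ∧ ‖x - a‖ ≤ φ x - φ y) :
    (∀ x ∈ M, r x x) ∧
    (∀ x ∈ M, ∀ y ∈ M, r x y → r y x → x = y) ∧
    (∀ x ∈ M, ∀ y ∈ M, ∀ z ∈ M, r y x → r x z → r y z) := by
  refine ⟨?_, ?_, ?_⟩
  · intro x hx
    rw [hr]
    exact ⟨x, hx, le_refl x, le_refl x, by simp⟩
  · intro x hx y hy hxy hyx
    rw [hr] at hxy hyx
    obtain ⟨a, ha, hyx', _, _⟩ := hxy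
    obtain ⟨b, hb, hxy', _, _⟩ := hyx
    exact le_antisymm hxy' hyx'
  · intro x hx y hy z hz hyx hxz
    rw [hr] at hyx hxz ⊢
    obtain ⟨a, ha, hxy, hya, hna⟩ := hyx
    obtain ⟨b, hb, hzx, hxb, hnb⟩ := hxz
    refine ⟨a, ha, le_trans hzx hxy, hya, ?_⟩
    have h1 : ‖z - x‖ ≤ ‖z - b‖ := h_left_monotone z x b hzx hxb
    calc ‖z - a‖ ≤ ‖z - x‖ + ‖x - a‖ := norm_sub_le_norm_sub_add_norm_sub z x a
      _ ≤ (φ z - φ x) + (φ x - φ y) := add_le_add (h1.trans hnb) hna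
      _ = φ z - φ y := by ring
end

section
/- Let (X,‖·‖,⪯) be a reflexive Banach space endowed with a partial order ⪯ whose order intervals are closed and convex and whose norm distance is left-monotone, and let M be a nonempty bounded closed subset of X. Let φ : M → ℝ₊ be lower weakly semi-continuous, and let T : M → WK(M) be a set-valued map with nonempty weakly compact values such that for every x ∈ M there exists a ∈ T(x) with x ⪯ a and ‖x − a‖ ≤ φ(x) − inf φ(T(x) ∩ [x,a]). Then there exists x* ∈ M with x* ∈ T(x*). -/
/-!
Brøndsted's order `p ≼ q ↔ ‖p - q‖ ≤ φ p - φ q` on the complete metric space `M` has a maximal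
element `m` by Zorn's lemma: along a chain `φ` controls distances, so a minimizing sequence
converges, and by lower semicontinuity its limit bounds the chain. The hypothesis on `T` gives
`a ∈ T m` above `m`. The set `T m ∩ [m, a]` is weakly compact, because closed convex sets are
weakly closed, hence weakly sequentially compact: on the closed span of a sequence countably many
norming functionals separate points, which makes the weak topology metrizable there. So `φ`
attains its infimum on it at some `b`, and left-monotonicity gives
`‖m - b‖ ≤ ‖m - a‖ ≤ φ m - φ b`. Thus `m ≼ b`, hence `b = m ∈ T m`.
-/

open Filter Topology

section WeakTopology

variable {X : Type*} [NormedAddCommGroup X] [NormedSpace ℝ X]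

theorem Convex.isClosed_toWeakSpace_image {s : Set X} (hs : Convex ℝ s) (hcl : IsClosed s) :
    IsClosed (toWeakSpace ℝ X '' s) := by
  rw [← closure_eq_iff_isClosed, ← hs.toWeakSpace_closure ℝ, hcl.closure_eq]

theorem TopologicalSpace.IsSeparable.exists_seq_dual_eq_zero {s : Set X} (hs : IsSeparable s) :
    ∃ f : ℕ → X →L[ℝ] ℝ, ∀ x ∈ s, (∀ n, f n x = 0) → x = 0 := by
  obtain ⟨c, hc, hsc⟩ := hs
  obtain ⟨d, hd⟩ := (hc.insert 0).exists_eq_range (Set.insert_nonempty 0 c)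
  choose f hf_norm hf_eval using fun n => exists_dual_vector'' ℝ (d n)
  refine ⟨f, fun x hx hfx => norm_le_zero_iff.mp (le_of_forall_pos_le_add fun ε hε => ?_)⟩
  have hx_cl : x ∈ closure (Set.range d) := hd ▸ closure_mono (Set.subset_insert 0 c) (hsc hx)
  obtain ⟨_, ⟨n, rfl⟩, hn⟩ := Metric.mem_closure_iff.mp hx_cl (ε / 2) (half_pos hε)
  rw [dist_eq_norm] at hn
  have hdn : ‖d n‖ ≤ ‖x - d n‖ :=
    calc ‖d n‖ = f n (d n - x) := by rw [map_sub, hf_eval, hfx, sub_zero]; rfl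
      _ ≤ ‖f n‖ * ‖d n - x‖ := (le_abs_self _).trans ((f n).le_opNorm _)
      _ ≤ ‖x - d n‖ := by
        rw [norm_sub_rev]; exact mul_le_of_le_one_left (norm_nonneg _) (hf_norm n)
  linarith [norm_le_norm_sub_add x (d n)]

theorem WeakSpace.continuous_dual_apply (f : X →L[ℝ] ℝ) :
    Continuous fun w : WeakSpace ℝ X => f ((toWeakSpace ℝ X).symm w) :=
  WeakBilin.eval_continuous _ f

theorem IsCompact.exists_weak_tendsto_subseq_of_separating {K : Set X}
    (hK : IsCompact (toWeakSpace ℝ X '' K)) (f : ℕ → X →L[ℝ] ℝ)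
    (hf : ∀ x ∈ K, ∀ y ∈ K, (∀ n, f n x = f n y) → x = y) {b : ℕ → X} (hb : ∀ n, b n ∈ K) :
    ∃ z ∈ K, ∃ σ : ℕ → ℕ, StrictMono σ ∧
      ∀ g : X →L[ℝ] ℝ, Tendsto (fun n => g (b (σ n))) atTop (𝓝 (g z)) := by
  have : CompactSpace (toWeakSpace ℝ X '' K) := isCompact_iff_compactSpace.mp hK
  have : TopologicalSpace.MetrizableSpace (toWeakSpace ℝ X '' K) := by
    refine Metric.PiNatEmbed.TopologicalSpace.MetrizableSpace.of_countable_separating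
      (fun n w => f n ((toWeakSpace ℝ X).symm w))
      (fun n => (WeakSpace.continuous_dual_apply (f n)).comp continuous_subtype_val) ?_
    rintro ⟨_, x, hx, rfl⟩ ⟨_, y, hy, rfl⟩ hxy
    by_contra! h
    exact hxy (Subtype.ext (congrArg (toWeakSpace ℝ X) (hf x hx y hy h)))
  obtain ⟨⟨_, z, hz, rfl⟩, σ, hσ, hlim⟩ := CompactSpace.tendsto_subseq fun n =>
    (⟨toWeakSpace ℝ X (b n), b n, hb n, rfl⟩ : toWeakSpace ℝ X '' K)
  exact ⟨z, hz, σ, hσ, fun g => ((WeakSpace.continuous_dual_apply g).tendsto _).comp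
    ((continuous_subtype_val.tendsto _).comp hlim)⟩

theorem IsCompact.exists_weak_tendsto_subseq {Q : Set X} (hQ : IsCompact (toWeakSpace ℝ X '' Q))
    {b : ℕ → X} (hb : ∀ n, b n ∈ Q) :
    ∃ z ∈ Q, ∃ σ : ℕ → ℕ, StrictMono σ ∧
      ∀ f : X →L[ℝ] ℝ, Tendsto (fun n => f (b (σ n))) atTop (𝓝 (f z)) := by
  set Y := (Submodule.span ℝ (Set.range b)).topologicalClosure
  have hbY : ∀ n, b n ∈ Y := fun n =>
    Submodule.le_topologicalClosure _ (Submodule.subset_span (Set.mem_range_self n))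
  obtain ⟨f, hf⟩ : ∃ f : ℕ → X →L[ℝ] ℝ, ∀ x ∈ (Y : Set X), (∀ n, f n x = 0) → x = 0 := by
    refine TopologicalSpace.IsSeparable.exists_seq_dual_eq_zero ?_
    rw [Submodule.topologicalClosure_coe]
    exact (Set.countable_range b).isSeparable.span.closure
  have hQY : IsCompact (toWeakSpace ℝ X '' (Q ∩ Y)) := by
    rw [Set.image_inter (toWeakSpace ℝ X).injective]
    exact hQ.inter_right
      (Y.convex.isClosed_toWeakSpace_image (Submodule.isClosed_topologicalClosure _))
  obtain ⟨z, hz, hσ⟩ := hQY.exists_weak_tendsto_subseq_of_separating f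
    (fun x hx y hy hxy => sub_eq_zero.mp (hf _ (Y.sub_mem hx.2 hy.2) (by simpa [sub_eq_zero])))
    (fun n => ⟨hb n, hbY n⟩)
  exact ⟨z, hz.1, hσ⟩

theorem IsCompact.exists_isMinOn_of_weak_lsc {K : Set X} (hK : IsCompact (toWeakSpace ℝ X '' K))
    (hK_ne : K.Nonempty) {φ : X → ℝ} (hφ_bdd : BddBelow (φ '' K))
    (hφ : ∀ u : ℕ → X, (∀ n, u n ∈ K) → ∀ z ∈ K,
      (∀ f : X →L[ℝ] ℝ, Tendsto (fun n => f (u n)) atTop (𝓝 (f z))) →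
      φ z ≤ liminf (fun n => φ (u n)) atTop) :
    ∃ z ∈ K, IsMinOn φ K z := by
  obtain ⟨w, -, hw_lim, hw_mem⟩ := exists_seq_tendsto_sInf (hK_ne.image φ) hφ_bdd
  choose v hvK hvw using hw_mem
  obtain ⟨z, hzK, σ, hσ, hvz⟩ := hK.exists_weak_tendsto_subseq hvK
  have hφz : φ z ≤ sInf (φ '' K) := by
    have hlim : Tendsto (fun n => φ (v (σ n))) atTop (𝓝 (sInf (φ '' K))) := by
      simpa only [hvw, Function.comp_def] using hw_lim.comp hσ.tendsto_atTop
    simpa only [hlim.liminf_eq] using hφ _ (fun n => hvK (σ n)) z hzK hvz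
  exact ⟨z, hzK, fun y hy => hφz.trans (csInf_le hφ_bdd ⟨y, hy, rfl⟩)⟩

theorem exists_norm_sub_le_sub_of_le_sInf {S C : Set X} {φ : X → ℝ} {x a : X}
    (hS : IsCompact (toWeakSpace ℝ X '' S)) (hC_closed : IsClosed C) (hC_convex : Convex ℝ C)
    (ha : a ∈ S ∩ C) (hC_norm : ∀ y ∈ C, ‖x - y‖ ≤ ‖x - a‖) (hφ_bdd : BddBelow (φ '' (S ∩ C)))
    (hφ : ∀ u : ℕ → X, (∀ n, u n ∈ S ∩ C) → ∀ z ∈ S ∩ C,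
      (∀ f : X →L[ℝ] ℝ, Tendsto (fun n => f (u n)) atTop (𝓝 (f z))) →
      φ z ≤ liminf (fun n => φ (u n)) atTop)
    (hxa : ‖x - a‖ ≤ φ x - sInf (φ '' (S ∩ C))) :
    ∃ b ∈ S, ‖x - b‖ ≤ φ x - φ b := by
  have hSC : IsCompact (toWeakSpace ℝ X '' (S ∩ C)) := by
    rw [Set.image_inter (toWeakSpace ℝ X).injective]
    exact hS.inter_right (hC_convex.isClosed_toWeakSpace_image hC_closed)
  obtain ⟨b, hb, hmin⟩ := hSC.exists_isMinOn_of_weak_lsc ⟨a, ha⟩ hφ_bdd hφ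
  have hφb : φ b ≤ sInf (φ '' (S ∩ C)) :=
    le_csInf (Set.Nonempty.image φ ⟨a, ha⟩) (Set.forall_mem_image.mpr hmin)
  exact ⟨b, hb.1, by linarith [hC_norm b hb.2]⟩

end WeakTopology

section Caristi

variable {E : Type*} [MetricSpace E] {φ : E → ℝ}

def BrondstedLE (φ : E → ℝ) (p q : E) : Prop := dist p q ≤ φ p - φ q

theorem BrondstedLE.trans {p q s : E} (hpq : BrondstedLE φ p q) (hqs : BrondstedLE φ q s) :
    BrondstedLE φ p s := by
  unfold BrondstedLE at *
  linarith [dist_triangle p q s]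

theorem IsChain.dist_le_abs_sub_of_brondstedLE {c : Set E} (hc : IsChain (BrondstedLE φ) c)
    {p q : E} (hp : p ∈ c) (hq : q ∈ c) : dist p q ≤ |φ p - φ q| := by
  rcases eq_or_ne p q with rfl | hpq
  · simp
  rcases hc hp hq hpq with h | h
  · exact le_trans h (le_abs_self _)
  · rw [dist_comm, abs_sub_comm]; exact le_trans h (le_abs_self _)

theorem IsChain.exists_brondstedLE_upperBound [CompleteSpace E] [Nonempty E]
    (hφ_bdd : BddBelow (Set.range φ))
    (hφ : ∀ (u : ℕ → E) (x : E), Tendsto u atTop (𝓝 x) → φ x ≤ liminf (fun n => φ (u n)) atTop)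
    {c : Set E} (hc : IsChain (BrondstedLE φ) c) : ∃ m, ∀ p ∈ c, BrondstedLE φ p m := by
  rcases c.eq_empty_or_nonempty with rfl | hc_ne
  · exact ⟨Classical.arbitrary E, by simp⟩
  have hφc_bdd : BddBelow (φ '' c) := hφ_bdd.mono (Set.image_subset_range φ c)
  obtain ⟨w, -, hw_lim, hw_mem⟩ := exists_seq_tendsto_sInf (hc_ne.image φ) hφc_bdd
  choose u huc hφu using hw_mem
  have hu_cauchy : CauchySeq u := Metric.cauchySeq_iff.mpr fun ε hε => by
    obtain ⟨N, hN⟩ := Metric.cauchySeq_iff.mp hw_lim.cauchySeq ε hε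
    refine ⟨N, fun m hm n hn => (hc.dist_le_abs_sub_of_brondstedLE (huc m) (huc n)).trans_lt ?_⟩
    rw [hφu, hφu, ← Real.dist_eq]
    exact hN m hm n hn
  obtain ⟨x, hx⟩ := cauchySeq_tendsto_of_complete hu_cauchy
  have hφx : φ x ≤ sInf (φ '' c) := by simpa only [hφu, hw_lim.liminf_eq] using hφ u x hx
  refine ⟨x, fun p hp => ?_⟩
  have hφp : sInf (φ '' c) ≤ φ p := csInf_le hφc_bdd ⟨p, hp, rfl⟩
  have hpx : dist p x ≤ |φ p - sInf (φ '' c)| :=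
    le_of_tendsto_of_tendsto' (tendsto_const_nhds.dist hx) (tendsto_const_nhds.sub hw_lim).abs
      fun n => hφu n ▸ hc.dist_le_abs_sub_of_brondstedLE hp (huc n)
  rw [abs_of_nonneg (sub_nonneg.mpr hφp)] at hpx
  exact hpx.trans (by linarith)

theorem exists_forall_brondstedLE_imp_eq [CompleteSpace E] [Nonempty E]
    (hφ_bdd : BddBelow (Set.range φ))
    (hφ : ∀ (u : ℕ → E) (x : E), Tendsto u atTop (𝓝 x) → φ x ≤ liminf (fun n => φ (u n)) atTop) :
    ∃ m, ∀ y, BrondstedLE φ m y → y = m := by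
  obtain ⟨m, hm⟩ := exists_maximal_of_chains_bounded
    (fun c hc => hc.exists_brondstedLE_upperBound hφ_bdd hφ) BrondstedLE.trans
  refine ⟨m, fun y hmy => dist_le_zero.mp ?_⟩
  have hym := hm y hmy
  unfold BrondstedLE at hmy hym
  linarith [dist_comm m y]

end Caristi

theorem caristi_penot_reflexive_weakly_compact_general {X : Type*}
    [NormedAddCommGroup X] [NormedSpace ℝ X] [CompleteSpace X] [PartialOrder X]
    (h_Ici_closed : ∀ a : X, IsClosed (Set.Ici a))
    (h_Iic_closed : ∀ a : X, IsClosed (Set.Iic a))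
    (h_Ici_convex : ∀ a : X, Convex ℝ (Set.Ici a))
    (h_Iic_convex : ∀ a : X, Convex ℝ (Set.Iic a))
    (h_left_monotone : ∀ x y z : X, x ≤ y → y ≤ z → ‖x - y‖ ≤ ‖x - z‖)
    (M : Set X) (hM_ne : M.Nonempty)
    (hM_closed : IsClosed M)
    (φ : X → ℝ) (hφ_nonneg : ∀ x ∈ M, 0 ≤ φ x)
    (hφ_lwsc : ∀ (x : ℕ → X), (∀ n, x n ∈ M) → ∀ a ∈ M,
      (∀ f : X →L[ℝ] ℝ, Tendsto (fun n => f (x n)) atTop (𝓝 (f a))) →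
      φ a ≤ liminf (fun n => φ (x n)) atTop)
    (T : X → Set X)
    (hT_sub : ∀ x ∈ M, T x ⊆ M)
    (hT_wcpt : ∀ x ∈ M, IsCompact ((toWeakSpace ℝ X) '' (T x)))
    (hcaristi : ∀ x ∈ M, ∃ a ∈ T x, x ≤ a ∧
      ‖x - a‖ ≤ φ x - sInf (φ '' (T x ∩ Set.Icc x a))) :
    ∃ x ∈ M, x ∈ T x := by
  have hsucc : ∀ x ∈ M, ∃ b ∈ T x, ‖x - b‖ ≤ φ x - φ b := by
    intro x hx
    obtain ⟨a, haT, hxa, ha⟩ := hcaristi x hx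
    have hTM : T x ∩ Set.Icc x a ⊆ M := Set.inter_subset_left.trans (hT_sub x hx)
    rw [← Set.Ici_inter_Iic] at hTM ha
    exact exists_norm_sub_le_sub_of_le_sInf (hT_wcpt x hx)
      ((h_Ici_closed x).inter (h_Iic_closed a)) ((h_Ici_convex x).inter (h_Iic_convex a))
      ⟨haT, hxa, le_rfl⟩ (fun y hy => h_left_monotone x y a hy.1 hy.2)
      ⟨0, Set.forall_mem_image.mpr fun y hy => hφ_nonneg y (hTM hy)⟩
      (fun u hu z hz => hφ_lwsc u (fun n => hTM (hu n)) z (hTM hz)) ha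
  have : CompleteSpace M := hM_closed.completeSpace_coe
  have : Nonempty M := hM_ne.to_subtype
  obtain ⟨m, hm⟩ := exists_forall_brondstedLE_imp_eq (φ := fun x : M => φ x)
    ⟨0, Set.forall_mem_range.mpr fun x => hφ_nonneg x x.2⟩
    fun u x hux => hφ_lwsc (fun n => u n) (fun n => (u n).2) x x.2
      fun f => (f.continuous.tendsto x).comp ((continuous_subtype_val.tendsto x).comp hux)
  obtain ⟨b, hbT, hb⟩ := hsucc m m.2
  have hbm : (⟨b, hT_sub m m.2 hbT⟩ : M) = m :=
    hm _ (by rwa [BrondstedLE, Subtype.dist_eq, dist_eq_norm])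
  exact ⟨m, m.2, congrArg Subtype.val hbm ▸ hbT⟩

/-- **Caristi–Penot theorem in reflexive Banach spaces (weakly compact values).**
Let `X` be a reflexive Banach space with a partial order whose order intervals
are closed and convex and whose norm distance is left-monotone, and let `M` be
a nonempty bounded closed subset of `X`. Let `φ : M → ℝ₊` be lower weakly
semi-continuous and `T : M → WK(M)` a set-valued map with nonempty weakly
compact values in `M` such that for every `x ∈ M` there exists `a ∈ T x` with
`x ⪯ a` and `‖x - a‖ ≤ φ x - inf φ(T x ∩ [x,a])`. Then `T` has a fixed point
in `M`. -/
theorem caristi_penot_reflexive_weakly_compact {X : Type*}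
    [NormedAddCommGroup X] [NormedSpace ℝ X] [CompleteSpace X] [PartialOrder X]
    (h_reflexive : Function.Surjective (NormedSpace.inclusionInDoubleDual ℝ X))
    (h_Ici_closed : ∀ a : X, IsClosed (Set.Ici a))
    (h_Iic_closed : ∀ a : X, IsClosed (Set.Iic a))
    (h_Ici_convex : ∀ a : X, Convex ℝ (Set.Ici a))
    (h_Iic_convex : ∀ a : X, Convex ℝ (Set.Iic a))
    (h_left_monotone : ∀ x y z : X, x ≤ y → y ≤ z → ‖x - y‖ ≤ ‖x - z‖)
    (M : Set X) (hM_ne : M.Nonempty) (hM_bdd : Bornology.IsBounded M)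
    (hM_closed : IsClosed M)
    (φ : X → ℝ) (hφ_nonneg : ∀ x ∈ M, 0 ≤ φ x)
    (hφ_lwsc : ∀ (x : ℕ → X), (∀ n, x n ∈ M) → ∀ a ∈ M,
      (∀ f : X →L[ℝ] ℝ, Tendsto (fun n => f (x n)) atTop (𝓝 (f a))) →
      φ a ≤ liminf (fun n => φ (x n)) atTop)
    (T : X → Set X)
    (hT_sub : ∀ x ∈ M, T x ⊆ M)
    (hT_ne : ∀ x ∈ M, (T x).Nonempty)
    (hT_wcpt : ∀ x ∈ M, IsCompact ((toWeakSpace ℝ X) '' (T x)))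
    (hcaristi : ∀ x ∈ M, ∃ a ∈ T x, x ≤ a ∧
      ‖x - a‖ ≤ φ x - sInf (φ '' (T x ∩ Set.Icc x a))) :
    ∃ x ∈ M, x ∈ T x :=
  caristi_penot_reflexive_weakly_compact_general h_Ici_closed h_Iic_closed h_Ici_convex h_Iic_convex
    h_left_monotone M hM_ne hM_closed φ hφ_nonneg hφ_lwsc T hT_sub hT_wcpt hcaristi
end
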